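/- arXiv:0903.5456 — 8 statements merged into one kernel-verified Lean document; each statement's English description precedes it below -/
import Mathlib

section
/- Fix t ∈ ℝ and n₀ ∈ ℕ, and let T be a bounded operator on H satisfying T Φ_0 = 0 and T Φ_s = x_s^{−n₀} Φ_s for all s ≥ 1. Set H_L := A_L† A_L. Then for all L ≤ M one has the operator-norm estimate ‖T ∘ (exp(i t H_M) − exp(i t H_L))‖ ≤ 2 Σ_{s=L+2}^{M+1} x_s^{−n₀}. If in addition Σ_{s=1}^{∞} x_s^{−n₀} < ∞, then the sequence of bounded operators (T ∘ exp(i t H_L))_{L∈ℕ} is Cauchy in operator norm and hence converges in the uniform topology. -/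
/-!
`H_L = A_L† A_L` is diagonal in the basis `Φ`: the vectors `A_L Φ_k = w_k Φ_{k-1}` are pairwise
orthogonal, so `H_L Φ_k = |w_k|² Φ_k`, where `|w_k|² = x_k` for `1 ≤ k ≤ L + 1` and `0`
otherwise. Hence `exp(itH_M) - exp(itH_L)` kills every `Φ_k` except those with
`L + 2 ≤ k ≤ M + 1`, on which it acts by a difference of two unimodular scalars. An operator
vanishing on all but finitely many basis vectors is a finite sum of rank-one operators
`⟪Φ_k, ·⟫ D Φ_k`, which gives the norm bound; summing it over consecutive `L` gives the Cauchy
property.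
-/

open Filter

theorem ContinuousLinearMap.exp_apply_of_apply_eq_smul {𝕂 E : Type*} [RCLike 𝕂]
    [NormedAddCommGroup E] [NormedSpace 𝕂 E] [CompleteSpace E]
    (S : E →L[𝕂] E) {c : 𝕂} {v : E} (h : S v = c • v) :
    NormedSpace.exp S v = NormedSpace.exp c • v := by
  have hpow : ∀ n : ℕ, (S ^ n) v = c ^ n • v := fun n => by
    induction n with
    | zero => simp
    | succ n ih => rw [pow_succ', mul_def, comp_apply, ih, map_smul, h, smul_smul, pow_succ]
  have hS := (NormedSpace.exp_series_hasSum_exp' (𝕂 := 𝕂) S).mapL (apply 𝕂 E v)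
  have hc := (NormedSpace.exp_series_hasSum_exp' (𝕂 := 𝕂) c).smul_const v
  simp only [apply_apply, smul_apply, hpow, smul_smul] at hS
  simp only [smul_eq_mul] at hc
  exact hS.unique hc

theorem ContinuousLinearMap.exp_I_mul_smul_apply_of_apply_eq_smul {E : Type*}
    [NormedAddCommGroup E] [NormedSpace ℂ E] [CompleteSpace E]
    (S : E →L[ℂ] E) (t : ℝ) {μ : ℝ} {v : E} (h : S v = (μ : ℂ) • v) :
    NormedSpace.exp ((Complex.I * t) • S) v = Complex.exp (↑(t * μ) * Complex.I) • v := by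
  refine (exp_apply_of_apply_eq_smul _ (c := Complex.I * t * μ) ?_).trans ?_
  · rw [smul_apply, h, smul_smul]
  · rw [← Complex.exp_eq_exp_ℂ]
    push_cast
    ring_nf

namespace HilbertBasis

variable {ι 𝕜 E F : Type*} [RCLike 𝕜] [NormedAddCommGroup E] [InnerProductSpace 𝕜 E]
  [NormedAddCommGroup F] [InnerProductSpace 𝕜 F]

theorem ext_inner_left (b : HilbertBasis ι 𝕜 E) {x y : E}
    (h : ∀ i, inner 𝕜 (b i) x = inner 𝕜 (b i) y) : x = y :=
  b.repr.injective <| lp.ext <| funext fun i => by simp only [b.repr_apply_apply, h]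

theorem opNorm_le_sum_norm_apply (b : HilbertBasis ι 𝕜 E) (D : E →L[𝕜] F) (s : Finset ι)
    (hD : ∀ i ∉ s, D (b i) = 0) : ‖D‖ ≤ ∑ i ∈ s, ‖D (b i)‖ := by
  classical
  have hdecomp : D = ∑ i ∈ s, (innerSL 𝕜 (b i)).smulRight (D (b i)) := by
    refine ContinuousLinearMap.ext_on
      ((Submodule.dense_iff_topologicalClosure_eq_top).2 b.dense_span) ?_
    rintro _ ⟨k, rfl⟩
    simp only [sum_apply, ContinuousLinearMap.smulRight_apply,
      innerSL_apply_apply, orthonormal_iff_ite.mp b.orthonormal, ite_smul, one_smul, zero_smul,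
      Finset.sum_ite_eq']
    split_ifs with hk
    · rfl
    · exact hD k hk
  calc ‖D‖ ≤ ∑ i ∈ s, ‖(innerSL 𝕜 (b i)).smulRight (D (b i))‖ := by
        conv_lhs => rw [hdecomp]
        exact norm_sum_le _ _
    _ = ∑ i ∈ s, ‖D (b i)‖ := by
        simp [ContinuousLinearMap.norm_smulRight_apply, b.orthonormal.1]

variable [CompleteSpace E]

/-- The images `A (b k)` are pairwise orthogonal: the shift `k ↦ k - 1` is injective except
for the truncated collision `0 - 1 = 1 - 1`, which `w 0 = 0` kills. -/
theorem adjoint_comp_self_apply_of_weighted_shift (b : HilbertBasis ℕ 𝕜 E) (A : E →L[𝕜] E)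
    (w : ℕ → 𝕜) (hw : w 0 = 0) (hA : ∀ k, A (b k) = w k • b (k - 1)) (k : ℕ) :
    (ContinuousLinearMap.adjoint A ∘L A) (b k) = ((‖w k‖ ^ 2 : ℝ) : 𝕜) • b k := by
  refine b.ext_inner_left fun j => ?_
  rw [ContinuousLinearMap.comp_apply, ContinuousLinearMap.adjoint_inner_right, hA, hA,
    inner_smul_left, inner_smul_right, inner_smul_right,
    orthonormal_iff_ite.mp b.orthonormal, orthonormal_iff_ite.mp b.orthonormal]
  by_cases hjk : j = k
  · subst hjk
    simp [RCLike.conj_mul]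
  · rcases Nat.eq_zero_or_pos j with rfl | hj
    · simp [hw, hjk]
    rcases Nat.eq_zero_or_pos k with rfl | hk
    · simp [hw]
    simp [hjk, show j - 1 ≠ k - 1 by omega]

theorem norm_comp_sub_le_two_mul_sum {E : Type*} [NormedAddCommGroup E] [InnerProductSpace ℂ E]
    (b : HilbertBasis ι ℂ E) (T U V : E →L[ℂ] E) (s : Finset ι) (τ θ φ : ι → ℝ)
    (hτ : ∀ i ∈ s, 0 ≤ τ i) (hT : ∀ i ∈ s, T (b i) = (τ i : ℂ) • b i)
    (hU : ∀ i, U (b i) = Complex.exp (θ i * Complex.I) • b i)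
    (hV : ∀ i, V (b i) = Complex.exp (φ i * Complex.I) • b i) (hθφ : ∀ i ∉ s, θ i = φ i) :
    ‖T ∘L (U - V)‖ ≤ 2 * ∑ i ∈ s, τ i := by
  refine (b.opNorm_le_sum_norm_apply _ s fun i hi => ?_).trans ?_
  · simp [hU, hV, hθφ i hi]
  rw [Finset.mul_sum]
  refine Finset.sum_le_sum fun i hi => ?_
  rw [ContinuousLinearMap.comp_apply, sub_apply, hU, hV, ← sub_smul, map_smul, hT i hi,
    norm_smul, norm_smul, b.orthonormal.1 i, mul_one, Complex.norm_real,
    Real.norm_of_nonneg (hτ i hi)]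
  refine mul_le_mul_of_nonneg_right ((norm_sub_le _ _).trans_eq ?_) (hτ i hi)
  rw [Complex.norm_exp_ofReal_mul_I, Complex.norm_exp_ofReal_mul_I]
  norm_num

end HilbertBasis

noncomputable def annihilationWeight (x : ℕ → ℝ) (L : ℕ) : ℕ → ℂ :=
  (Set.Icc 1 (L + 1)).indicator fun k => (√(x k) : ℂ)

theorem annihilationWeight_zero (x : ℕ → ℝ) (L : ℕ) : annihilationWeight x L 0 = 0 := by
  simp [annihilationWeight]

theorem annihilationWeight_eq_of_notMem_Icc (x : ℕ → ℝ) {L M k : ℕ} (hLM : L ≤ M)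
    (hk : k ∉ Finset.Icc (L + 2) (M + 1)) :
    annihilationWeight x M k = annihilationWeight x L k := by
  rw [Finset.mem_Icc] at hk
  by_cases hkL : k ≤ L + 1
  · simp [annihilationWeight, Set.indicator, hkL, show k ≤ M + 1 by omega]
  · simp [annihilationWeight, Set.indicator, hkL, show ¬k ≤ M + 1 by omega]

theorem apply_eq_annihilationWeight_smul {H : Type*} [NormedAddCommGroup H]
    [InnerProductSpace ℂ H] (Φ : HilbertBasis ℕ ℂ H) (x : ℕ → ℝ) (A : H →L[ℂ] H) (L : ℕ)
    (h_zero : A (Φ 0) = 0)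
    (h_mid : ∀ k, 1 ≤ k → k ≤ L + 1 → A (Φ k) = (√(x k) : ℂ) • Φ (k - 1))
    (h_hi : ∀ k, L + 2 ≤ k → A (Φ k) = 0) (k : ℕ) :
    A (Φ k) = annihilationWeight x L k • Φ (k - 1) := by
  rcases Nat.eq_zero_or_pos k with rfl | hk
  · simp [h_zero, annihilationWeight_zero]
  by_cases hkL : k ≤ L + 1
  · simp [annihilationWeight, h_mid k hk hkL, Set.indicator, hkL,
      Nat.one_le_iff_ne_zero.2 hk.ne']
  · simp [annihilationWeight, h_hi k (by omega), Set.indicator, hkL]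

theorem statement_8_general
    {H : Type*} [NormedAddCommGroup H] [InnerProductSpace ℂ H] [CompleteSpace H]
    (Φ : HilbertBasis ℕ ℂ H)
    (x : ℕ → ℝ) (hx_nonneg : ∀ n, 0 ≤ x n)
    (A : ℕ → H →L[ℂ] H)
    (hA_zero : ∀ L, A L (Φ 0) = 0)
    (hA_mid : ∀ L k, 1 ≤ k → k ≤ L + 1 →
      A L (Φ k) = (Real.sqrt (x k) : ℂ) • Φ (k - 1))
    (hA_hi : ∀ L k, L + 2 ≤ k → A L (Φ k) = 0)
    (t : ℝ) (n₀ : ℕ)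
    (T : H →L[ℂ] H)
    (hT : ∀ s, 1 ≤ s → T (Φ s) = (((x s ^ n₀)⁻¹ : ℝ) : ℂ) • Φ s)
    (HL : ℕ → H →L[ℂ] H)
    (hHL : ∀ L, HL L = ContinuousLinearMap.adjoint (A L) ∘L A L) :
    (∀ L M, L ≤ M →
      ‖T ∘L (NormedSpace.exp ((Complex.I * (t : ℂ)) • HL M)
            - NormedSpace.exp ((Complex.I * (t : ℂ)) • HL L))‖
        ≤ 2 * ∑ s ∈ Finset.Icc (L + 2) (M + 1), (x s ^ n₀)⁻¹) ∧
    (Summable (fun s : ℕ => (x (s + 1) ^ n₀)⁻¹) →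
      CauchySeq (fun L => T ∘L NormedSpace.exp ((Complex.I * (t : ℂ)) • HL L)) ∧
      ∃ B : H →L[ℂ] H,
        Tendsto (fun L => T ∘L NormedSpace.exp ((Complex.I * (t : ℂ)) • HL L))
          atTop (nhds B)) := by
  set U : ℕ → H →L[ℂ] H := fun L => NormedSpace.exp ((Complex.I * (t : ℂ)) • HL L)
  have hU : ∀ L k, U L (Φ k) =
      Complex.exp (↑(t * ‖annihilationWeight x L k‖ ^ 2) * Complex.I) • Φ k := fun L k =>
    ContinuousLinearMap.exp_I_mul_smul_apply_of_apply_eq_smul _ t <| by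
      rw [hHL]
      exact Φ.adjoint_comp_self_apply_of_weighted_shift (A L) _ (annihilationWeight_zero x L)
        (apply_eq_annihilationWeight_smul Φ x (A L) L (hA_zero L) (hA_mid L) (hA_hi L)) k
  have key : ∀ L M, L ≤ M →
      ‖T ∘L (U M - U L)‖ ≤ 2 * ∑ s ∈ Finset.Icc (L + 2) (M + 1), (x s ^ n₀)⁻¹ :=
    fun L M hLM => Φ.norm_comp_sub_le_two_mul_sum T (U M) (U L) _ _ _ _
      (fun k _ => inv_nonneg.2 (pow_nonneg (hx_nonneg k) n₀))
      (fun k hk => hT k (by rw [Finset.mem_Icc] at hk; omega)) (hU M) (hU L)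
      (fun k hk => by rw [annihilationWeight_eq_of_notMem_Icc x hLM hk])
  refine ⟨key, fun hsum => ?_⟩
  have hcauchy : CauchySeq fun L => T ∘L U L := by
    refine cauchySeq_of_dist_le_of_summable (fun n => 2 * (x (n + 2) ^ n₀)⁻¹) (fun n => ?_)
      (((summable_nat_add_iff 1).2 hsum).mul_left 2)
    simpa [dist_eq_norm', ContinuousLinearMap.comp_sub] using key n (n + 1) n.le_succ
  exact ⟨hcauchy, cauchySeq_tendsto_of_complete hcauchy⟩

/-- With H_L = A_L† A_L and T bounded with T Φ_0 = 0, T Φ_s = x_s^{−n₀} Φ_s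
for s ≥ 1, for all L ≤ M one has ‖T ∘ (exp(itH_M) − exp(itH_L))‖ ≤ 2 Σ_{s=L+2}^{M+1} x_s^{−n₀}.
If moreover Σ_{s=1}^{∞} x_s^{−n₀} < ∞, then (T ∘ exp(itH_L))_L is Cauchy in operator norm
and hence converges in the uniform topology. -/
theorem statement_8
    {H : Type*} [NormedAddCommGroup H] [InnerProductSpace ℂ H] [CompleteSpace H]
    (Φ : HilbertBasis ℕ ℂ H)
    (x : ℕ → ℝ) (hx_nonneg : ∀ n, 0 ≤ x n) (hx_pos : ∀ n, 1 ≤ n → 0 < x n)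
    (A : ℕ → H →L[ℂ] H)
    (hA_zero : ∀ L, A L (Φ 0) = 0)
    (hA_mid : ∀ L k, 1 ≤ k → k ≤ L + 1 →
      A L (Φ k) = (Real.sqrt (x k) : ℂ) • Φ (k - 1))
    (hA_hi : ∀ L k, L + 2 ≤ k → A L (Φ k) = 0)
    (t : ℝ) (n₀ : ℕ)
    (T : H →L[ℂ] H)
    (hT_zero : T (Φ 0) = 0)
    (hT : ∀ s, 1 ≤ s → T (Φ s) = (((x s ^ n₀)⁻¹ : ℝ) : ℂ) • Φ s)
    (HL : ℕ → H →L[ℂ] H)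
    (hHL : ∀ L, HL L = ContinuousLinearMap.adjoint (A L) ∘L A L) :
    (∀ L M, L ≤ M →
      ‖T ∘L (NormedSpace.exp ((Complex.I * (t : ℂ)) • HL M)
            - NormedSpace.exp ((Complex.I * (t : ℂ)) • HL L))‖
        ≤ 2 * ∑ s ∈ Finset.Icc (L + 2) (M + 1), (x s ^ n₀)⁻¹) ∧
    (Summable (fun s : ℕ => (x (s + 1) ^ n₀)⁻¹) →
      CauchySeq (fun L => T ∘L NormedSpace.exp ((Complex.I * (t : ℂ)) • HL L)) ∧
      ∃ B : H →L[ℂ] H,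
        Tendsto (fun L => T ∘L NormedSpace.exp ((Complex.I * (t : ℂ)) • HL L))
          atTop (nhds B)) :=
  statement_8_general Φ x hx_nonneg A hA_zero hA_mid hA_hi t n₀ T hT HL hHL
end

section
/- Set H_L := A_L† A_L. Then for all L ≤ M and every t ∈ ℝ one has the identity of bounded operators exp(i t H_L) = (I − Q_{L+1}) + Q_{L+1} ∘ exp(i t H_M) ∘ Q_{L+1}, where I is the identity operator on H. -/
open scoped InnerProductSpace

/-!
In the basis `Φ` both `H_N = A_N† A_N` and `Q_{L+1}` are diagonal: `H_N Φ_k = x_k Φ_k` for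
`1 ≤ k ≤ N + 1` and `H_N Φ_k = 0` otherwise, while `Q_{L+1}` keeps exactly `Φ_0, …, Φ_{L+1}`.
Hence for `L ≤ M` the projection `P = Q_{L+1}` commutes with `H_M` and `H_L = H_M P`, and the
claim is the identity `exp (B P) = (1 - P) + P exp(B) P`, valid for any idempotent `P` commuting
with `B`.
-/

/-- Here `(B P)ⁿ = Bⁿ P` for `n ≥ 1`, so the exponential series of `B P` is that of `B` times `P`,
except for the constant term `1 = P + (1 - P)`. -/
theorem NormedSpace.exp_mul_of_isIdempotentElem_of_commute {𝔸 : Type*} [NormedRing 𝔸]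
    [NormedAlgebra ℂ 𝔸] [CompleteSpace 𝔸] {B P : 𝔸} (hP : IsIdempotentElem P)
    (hPB : Commute P B) :
    NormedSpace.exp (B * P) = (1 - P) + P * NormedSpace.exp B * P := by
  have hpow : ∀ n : ℕ, (B * P) ^ n = B ^ n * P + if n = 0 then 1 - P else 0 := by
    rintro (_ | n)
    · simp
    · rw [hPB.symm.mul_pow, hP.pow_succ_eq]
      simp
  have hsum : HasSum (fun n : ℕ => (n.factorial⁻¹ : ℂ) • (B * P) ^ n)
      (NormedSpace.exp B * P + (1 - P)) := by
    have hterm : ∀ n : ℕ, (n.factorial⁻¹ : ℂ) • (B * P) ^ n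
        = (n.factorial⁻¹ : ℂ) • B ^ n * P + if n = 0 then 1 - P else 0 := by
      intro n
      rw [hpow, smul_add, smul_mul_assoc]
      split_ifs <;> simp_all
    simp only [hterm]
    exact ((NormedSpace.exp_series_hasSum_exp' B).mul_right P).add (hasSum_ite_eq 0 (1 - P))
  rw [(NormedSpace.exp_series_hasSum_exp' (𝕂 := ℂ) (B * P)).unique hsum, mul_assoc,
    ← hPB.exp_right.eq, ← mul_assoc, hP.eq, add_comm]

namespace HilbertBasis

variable {ι 𝕜 E : Type*} [RCLike 𝕜] [NormedAddCommGroup E] [InnerProductSpace 𝕜 E]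

theorem ext_inner (b : HilbertBasis ι 𝕜 E) {u v : E} (h : ∀ i, ⟪b i, u⟫_𝕜 = ⟪b i, v⟫_𝕜) :
    u = v :=
  b.repr.injective <| lp.ext <| funext fun i => by
    rw [b.repr_apply_apply, b.repr_apply_apply, h]

theorem continuousLinearMap_ext {F : Type*} [NormedAddCommGroup F] [NormedSpace 𝕜 F]
    (b : HilbertBasis ι 𝕜 E) {f g : E →L[𝕜] F} (h : ∀ i, f (b i) = g (b i)) : f = g :=
  ContinuousLinearMap.ext_on (Submodule.dense_iff_topologicalClosure_eq_top.mpr b.dense_span)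
    (Set.forall_mem_range.mpr h)

theorem sum_inner_smul_apply_self [DecidableEq ι] (b : HilbertBasis ι 𝕜 E) (s : Finset ι)
    (j : ι) : ∑ i ∈ s, ⟪b i, b j⟫_𝕜 • b i = if j ∈ s then b j else 0 := by
  simp only [orthonormal_iff_ite.mp b.orthonormal, ite_smul, one_smul, zero_smul,
    Finset.sum_ite_eq']

theorem mul_eq_of_apply_eq_smul (b : HilbertBasis ι 𝕜 E) {f g h : E →L[𝕜] E} {c d e : ι → 𝕜}
    (hf : ∀ i, f (b i) = c i • b i) (hg : ∀ i, g (b i) = d i • b i)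
    (hh : ∀ i, h (b i) = e i • b i) (hcde : ∀ i, c i * d i = e i) : f * g = h :=
  b.continuousLinearMap_ext fun i => by
    rw [mul_apply_eq_comp, hg, map_smul, hf, smul_smul, mul_comm, hcde, hh]

theorem adjoint_comp_apply_of_lowering [CompleteSpace E] (b : HilbertBasis ℕ 𝕜 E)
    {T : E →L[𝕜] E} {a : ℕ → 𝕜} (ha : a 0 = 0) (hT : ∀ k, T (b k) = a k • b (k - 1)) (k : ℕ) :
    (ContinuousLinearMap.adjoint T ∘L T) (b k) = (starRingEnd 𝕜 (a k) * a k) • b k := by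
  refine b.ext_inner fun j => ?_
  have hb := orthonormal_iff_ite.mp b.orthonormal
  rw [ContinuousLinearMap.comp_apply, ContinuousLinearMap.adjoint_inner_right, hT, hT,
    inner_smul_left, inner_smul_right, inner_smul_right, hb, hb]
  rcases eq_or_ne j k with rfl | hjk
  · simp
  -- `b (j - 1) ⊥ b (k - 1)` unless `j` or `k` is `0`, and there `a` vanishes.
  rw [if_neg hjk, mul_zero]
  rcases Nat.eq_zero_or_pos j with rfl | hj
  · simp [ha]
  rcases Nat.eq_zero_or_pos k with rfl | hk
  · simp [ha]
  simp [show j - 1 ≠ k - 1 by omega]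

end HilbertBasis

theorem HilbertBasis.adjoint_comp_apply_of_truncated_lowering {E : Type*}
    [NormedAddCommGroup E] [InnerProductSpace ℂ E] [CompleteSpace E] (b : HilbertBasis ℕ ℂ E)
    {x : ℕ → ℝ} (hx : ∀ n, 0 ≤ x n) {N : ℕ} {T : E →L[ℂ] E} (hT_zero : T (b 0) = 0)
    (hT_mid : ∀ k, 1 ≤ k → k ≤ N + 1 → T (b k) = (√(x k) : ℂ) • b (k - 1))
    (hT_hi : ∀ k, N + 2 ≤ k → T (b k) = 0) (k : ℕ) :
    (ContinuousLinearMap.adjoint T ∘L T) (b k)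
      = (if 1 ≤ k ∧ k ≤ N + 1 then (x k : ℂ) else 0) • b k := by
  have hT : ∀ k, T (b k) = (if 1 ≤ k ∧ k ≤ N + 1 then (√(x k) : ℂ) else 0) • b (k - 1) := by
    intro k
    split_ifs with hk
    · exact hT_mid k hk.1 hk.2
    · rcases Nat.eq_zero_or_pos k with rfl | hk0
      · simp [hT_zero]
      · simp [hT_hi k (by omega)]
  rw [b.adjoint_comp_apply_of_lowering (by simp) hT]
  split_ifs
  · rw [Complex.conj_ofReal, ← Complex.ofReal_mul, Real.mul_self_sqrt (hx k)]
  · simp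

theorem statement_9_general
    {H : Type*} [NormedAddCommGroup H] [InnerProductSpace ℂ H] [CompleteSpace H]
    (Φ : HilbertBasis ℕ ℂ H)
    (x : ℕ → ℝ) (hx_nonneg : ∀ n, 0 ≤ x n)
    (A : ℕ → H →L[ℂ] H)
    (hA_zero : ∀ L, A L (Φ 0) = 0)
    (hA_mid : ∀ L k, 1 ≤ k → k ≤ L + 1 →
      A L (Φ k) = (Real.sqrt (x k) : ℂ) • Φ (k - 1))
    (hA_hi : ∀ L k, L + 2 ≤ k → A L (Φ k) = 0)
    (Q : ℕ → H →L[ℂ] H)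
    (hQ : ∀ L (v : H), Q L v = ∑ k ∈ Finset.range (L + 1), ⟪Φ k, v⟫_ℂ • Φ k)
    (HL : ℕ → H →L[ℂ] H)
    (hHL : ∀ L, HL L = ContinuousLinearMap.adjoint (A L) ∘L A L)
    (L M : ℕ) (hLM : L ≤ M) (t : ℝ) :
    NormedSpace.exp ((Complex.I * (t : ℂ)) • HL L)
      = (1 - Q (L + 1))
        + Q (L + 1) ∘L NormedSpace.exp ((Complex.I * (t : ℂ)) • HL M) ∘L Q (L + 1) := by
  have hHL_basis : ∀ N k, HL N (Φ k) = (if 1 ≤ k ∧ k ≤ N + 1 then (x k : ℂ) else 0) • Φ k :=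
    fun N k => by
      rw [hHL]
      exact Φ.adjoint_comp_apply_of_truncated_lowering hx_nonneg (hA_zero N) (hA_mid N) (hA_hi N) k
  have hQ_basis : ∀ k, Q (L + 1) (Φ k) = (if k ≤ L + 1 then 1 else 0 : ℂ) • Φ k := by
    intro k
    rw [hQ, Φ.sum_inner_smul_apply_self]
    simp
  have hQ_idem : IsIdempotentElem (Q (L + 1)) :=
    Φ.mul_eq_of_apply_eq_smul hQ_basis hQ_basis hQ_basis fun k => by split_ifs <;> simp
  have hHQ : HL M * Q (L + 1) = HL L :=
    Φ.mul_eq_of_apply_eq_smul (hHL_basis M) hQ_basis (hHL_basis L) fun k => by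
      split_ifs <;> first | (exfalso; omega) | simp
  have hQH : Q (L + 1) * HL M = HL L :=
    Φ.mul_eq_of_apply_eq_smul hQ_basis (hHL_basis M) (hHL_basis L) fun k => by
      split_ifs <;> first | (exfalso; omega) | simp
  have hcomm : Commute (Q (L + 1)) ((Complex.I * t) • HL M) :=
    Commute.smul_right (hQH.trans hHQ.symm) _
  rw [← hHQ, ← smul_mul_assoc, NormedSpace.exp_mul_of_isIdempotentElem_of_commute hQ_idem hcomm]
  rfl

/-- With H_L = A_L† A_L, for all L ≤ M and t ∈ ℝ,
exp(itH_L) = (I − Q_{L+1}) + Q_{L+1} ∘ exp(itH_M) ∘ Q_{L+1}. -/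
theorem statement_9
    {H : Type*} [NormedAddCommGroup H] [InnerProductSpace ℂ H] [CompleteSpace H]
    (Φ : HilbertBasis ℕ ℂ H)
    (x : ℕ → ℝ) (hx_nonneg : ∀ n, 0 ≤ x n) (hx_pos : ∀ n, 1 ≤ n → 0 < x n)
    (A : ℕ → H →L[ℂ] H)
    (hA_zero : ∀ L, A L (Φ 0) = 0)
    (hA_mid : ∀ L k, 1 ≤ k → k ≤ L + 1 →
      A L (Φ k) = (Real.sqrt (x k) : ℂ) • Φ (k - 1))
    (hA_hi : ∀ L k, L + 2 ≤ k → A L (Φ k) = 0)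
    (Q : ℕ → H →L[ℂ] H)
    (hQ : ∀ L (v : H), Q L v = ∑ k ∈ Finset.range (L + 1), ⟪Φ k, v⟫_ℂ • Φ k)
    (HL : ℕ → H →L[ℂ] H)
    (hHL : ∀ L, HL L = ContinuousLinearMap.adjoint (A L) ∘L A L)
    (L M : ℕ) (hLM : L ≤ M) (t : ℝ) :
    NormedSpace.exp ((Complex.I * (t : ℂ)) • HL L)
      = (1 - Q (L + 1))
        + Q (L + 1) ∘L NormedSpace.exp ((Complex.I * (t : ℂ)) • HL M) ∘L Q (L + 1) :=
  statement_9_general Φ x hx_nonneg A hA_zero hA_mid hA_hi Q hQ HL hHL L M hLM t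
end

section
/- Let z ∈ ℂ be such that Σ_{k=0}^{∞} |z|^{2k}/x_k! converges. Then for every M ∈ ℕ one has A_M Ξ(z) = z · Q_M Ξ(z); that is, the generalized coherent state Ξ(z) is an eigenvector of the truncated annihilation operator up to the projection Q_M. -/
/-!
Write `S = ∑ₖ cₖ Φₖ` with `cₖ = zᵏ / √(x_k!)`, so that `Ξ(z)` is a scalar multiple of `S`; the
series converges because `∑ |cₖ|² = N(|z|²) < ∞`. Since `A_M` is continuous it may be applied
termwise; it kills `Φ₀` and every `Φₖ` with `k ≥ M + 2`, and lowers `Φₖ₊₁` to `√xₖ₊₁ Φₖ` for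
`k ≤ M`. The recursion `c_{k+1} √x_{k+1} = z c_k` then turns `A_M S` into `z ∑_{k ≤ M} cₖ Φₖ`,
which is `z Q_M S` because `cₖ = ⟪Φₖ, S⟫`.
-/

open scoped InnerProductSpace

section Orthonormal

variable {ι 𝕜 E : Type*} [RCLike 𝕜] [NormedAddCommGroup E] [InnerProductSpace 𝕜 E]
  {v : ι → E}

theorem Orthonormal.summable_smul_of_summable_norm_sq [CompleteSpace E] (hv : Orthonormal 𝕜 v)
    {c : ι → 𝕜} (hc : Summable fun i => ‖c i‖ ^ 2) : Summable fun i => c i • v i := by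
  simpa using (hv.orthogonalFamily.summable_iff_norm_sq_summable c).2 hc

theorem Orthonormal.inner_right_tsum (hv : Orthonormal 𝕜 v) {c : ι → 𝕜}
    (hc : Summable fun i => c i • v i) (i : ι) : ⟪v i, ∑' j, c j • v j⟫_𝕜 = c i := by
  classical
  rw [← innerSL_apply_apply, (innerSL 𝕜 (v i)).map_tsum hc]
  simp [orthonormal_iff_ite.mp hv]

end Orthonormal

theorem ContinuousLinearMap.map_tsum_of_truncated_lowering {R E : Type*} [Semiring R]
    [AddCommMonoid E] [Module R E] [TopologicalSpace E] [T2Space E]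
    (T : E →L[R] E) (b : ℕ → E) (w c : ℕ → R) (z : R) (M : ℕ)
    (h_zero : T (b 0) = 0) (h_mid : ∀ k ≤ M, T (b (k + 1)) = w (k + 1) • b k)
    (h_hi : ∀ k, M + 2 ≤ k → T (b k) = 0) (hc : ∀ k ≤ M, c (k + 1) * w (k + 1) = z * c k)
    (hsum : Summable fun k => c k • b k) :
    T (∑' k, c k • b k) = z • ∑ k ∈ Finset.range (M + 1), c k • b k := by
  have h_finite : T (∑' k, c k • b k) = ∑ k ∈ Finset.range (M + 2), c k • T (b k) := by
    simp only [T.map_tsum hsum, map_smul]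
    exact tsum_eq_sum fun k hk => by rw [h_hi k (by simpa using hk), smul_zero]
  rw [h_finite, Finset.sum_range_succ', h_zero, smul_zero, add_zero, Finset.smul_sum]
  refine Finset.sum_congr rfl fun k hk => ?_
  have hkM : k ≤ M := Nat.lt_succ_iff.mp (Finset.mem_range.mp hk)
  rw [h_mid k hkM, smul_smul, hc k hkM, mul_smul]

section CoherentCoeff

variable (x xfact : ℕ → ℝ)

theorem pos_of_forall_succ_eq_mul (hx_pos : ∀ n, 1 ≤ n → 0 < x n) (hxfact0 : xfact 0 = 1)
    (hxfact : ∀ k, xfact (k + 1) = xfact k * x (k + 1)) (k : ℕ) : 0 < xfact k := by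
  induction k with
  | zero => rw [hxfact0]; exact one_pos
  | succ n ih => rw [hxfact n]; exact mul_pos ih (hx_pos (n + 1) n.succ_pos)

/-- The coefficient of `Φₖ` in the unnormalised coherent state. -/
noncomputable def coherentCoeff (z : ℂ) (k : ℕ) : ℂ := z ^ k / (Real.sqrt (xfact k) : ℂ)

variable {xfact}

theorem norm_coherentCoeff_sq (z : ℂ) {k : ℕ} (hk : 0 ≤ xfact k) :
    ‖coherentCoeff xfact z k‖ ^ 2 = ‖z‖ ^ (2 * k) / xfact k := by
  rw [coherentCoeff, norm_div, norm_pow, Complex.norm_real,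
    Real.norm_of_nonneg (Real.sqrt_nonneg _), div_pow, Real.sq_sqrt hk, ← pow_mul, mul_comm k 2]

theorem coherentCoeff_succ_mul (z : ℂ) {k : ℕ} (hx : 0 < x (k + 1))
    (hxfact : xfact (k + 1) = xfact k * x (k + 1)) :
    coherentCoeff xfact z (k + 1) * (Real.sqrt (x (k + 1)) : ℂ) = z * coherentCoeff xfact z k := by
  have hsqrt : (Real.sqrt (x (k + 1)) : ℂ) ≠ 0 := by
    exact_mod_cast (Real.sqrt_pos.mpr hx).ne'
  rw [coherentCoeff, coherentCoeff, hxfact, Real.sqrt_mul' _ hx.le, Complex.ofReal_mul, pow_succ,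
    div_mul_eq_mul_div, mul_div_mul_right _ _ hsqrt]
  ring

end CoherentCoeff

theorem statement_10_general
    {H : Type*} [NormedAddCommGroup H] [InnerProductSpace ℂ H] [CompleteSpace H]
    (Φ : HilbertBasis ℕ ℂ H)
    (x : ℕ → ℝ) (hx_pos : ∀ n, 1 ≤ n → 0 < x n)
    (A : ℕ → H →L[ℂ] H)
    (hA_zero : ∀ L, A L (Φ 0) = 0)
    (hA_mid : ∀ L k, 1 ≤ k → k ≤ L + 1 →
      A L (Φ k) = (Real.sqrt (x k) : ℂ) • Φ (k - 1))
    (hA_hi : ∀ L k, L + 2 ≤ k → A L (Φ k) = 0)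
    (Q : ℕ → H →L[ℂ] H)
    (hQ : ∀ L (v : H), Q L v = ∑ k ∈ Finset.range (L + 1), ⟪Φ k, v⟫_ℂ • Φ k)
    (xfact : ℕ → ℝ) (hxfact0 : xfact 0 = 1)
    (hxfact : ∀ k, xfact (k + 1) = xfact k * x (k + 1))
    (z : ℂ)
    (hconv : Summable (fun k : ℕ => ‖z‖ ^ (2 * k) / xfact k))
    (Ξ : H)
    (hΞ : Ξ = ((Real.sqrt (∑' k : ℕ, ‖z‖ ^ (2 * k) / xfact k))⁻¹ : ℂ)
        • ∑' k : ℕ, (z ^ k / (Real.sqrt (xfact k) : ℂ)) • Φ k)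
    (M : ℕ) :
    A M Ξ = z • Q M Ξ := by
  set c := coherentCoeff xfact z
  have hxfact_pos := pos_of_forall_succ_eq_mul x xfact hx_pos hxfact0 hxfact
  have hsum : Summable fun k => c k • Φ k :=
    Φ.orthonormal.summable_smul_of_summable_norm_sq <|
      hconv.congr fun k => (norm_coherentCoeff_sq z (hxfact_pos k).le).symm
  have hAS : A M (∑' k, c k • Φ k) = z • ∑ k ∈ Finset.range (M + 1), c k • Φ k :=
    (A M).map_tsum_of_truncated_lowering Φ (fun k => (Real.sqrt (x k) : ℂ)) c z M (hA_zero M)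
      (fun k hk => hA_mid M (k + 1) k.succ_pos (by omega))
      (hA_hi M) (fun k _ => coherentCoeff_succ_mul x z (hx_pos _ k.succ_pos) (hxfact k)) hsum
  have hQS : Q M (∑' k, c k • Φ k) = ∑ k ∈ Finset.range (M + 1), c k • Φ k := by
    simp only [hQ, Φ.orthonormal.inner_right_tsum hsum]
  change Ξ = _ • ∑' k, c k • Φ k at hΞ
  rw [hΞ, map_smul, map_smul, hAS, hQS, smul_comm]

/-- If Σ |z|^{2k}/x_k! converges, then for every M,
A_M Ξ(z) = z · Q_M Ξ(z). -/
theorem statement_10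
    {H : Type*} [NormedAddCommGroup H] [InnerProductSpace ℂ H] [CompleteSpace H]
    (Φ : HilbertBasis ℕ ℂ H)
    (x : ℕ → ℝ) (hx_nonneg : ∀ n, 0 ≤ x n) (hx_pos : ∀ n, 1 ≤ n → 0 < x n)
    (A : ℕ → H →L[ℂ] H)
    (hA_zero : ∀ L, A L (Φ 0) = 0)
    (hA_mid : ∀ L k, 1 ≤ k → k ≤ L + 1 →
      A L (Φ k) = (Real.sqrt (x k) : ℂ) • Φ (k - 1))
    (hA_hi : ∀ L k, L + 2 ≤ k → A L (Φ k) = 0)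
    (Q : ℕ → H →L[ℂ] H)
    (hQ : ∀ L (v : H), Q L v = ∑ k ∈ Finset.range (L + 1), ⟪Φ k, v⟫_ℂ • Φ k)
    (xfact : ℕ → ℝ) (hxfact0 : xfact 0 = 1)
    (hxfact : ∀ k, xfact (k + 1) = xfact k * x (k + 1))
    (z : ℂ)
    (hconv : Summable (fun k : ℕ => ‖z‖ ^ (2 * k) / xfact k))
    (Ξ : H)
    (hΞ : Ξ = ((Real.sqrt (∑' k : ℕ, ‖z‖ ^ (2 * k) / xfact k))⁻¹ : ℂ)
        • ∑' k : ℕ, (z ^ k / (Real.sqrt (xfact k) : ℂ)) • Φ k)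
    (M : ℕ) :
    A M Ξ = z • Q M Ξ :=
  statement_10_general Φ x hx_pos A hA_zero hA_mid hA_hi Q hQ xfact hxfact0 hxfact z hconv Ξ hΞ M
end

section
/- For every z ∈ ℂ and every L ≥ 1 the quasi-coherent state Ψ_L(z) satisfies A_L Ψ_L(z) = z · √(N_{L−1}(|z|²)/N_L(|z|²)) · Ψ_{L−1}(z). -/
/-! The lowering operator sends `Φ (k+1)` to `√x_{k+1} Φ k` and kills `Φ 0`, while the coefficients
`z^k / √(x_k!)` of the quasi-coherent state satisfy `c_{k+1} √x_{k+1} = z c_k`. Hence `A_L` maps the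
unnormalized state of length `L + 2` to `z` times the one of length `L + 1`, and the claim is this
identity rescaled by the normalizations `√N_L` and `√N_{L-1}`. -/

open Finset

lemma pos_of_succ_eq_mul {f x : ℕ → ℝ} (hf0 : 0 < f 0) (hf : ∀ k, f (k + 1) = f k * x (k + 1))
    (hx : ∀ k, 0 < x (k + 1)) : ∀ k, 0 < f k
  | 0 => hf0
  | k + 1 => by rw [hf]; exact mul_pos (pos_of_succ_eq_mul hf0 hf hx k) (hx k)

lemma sum_range_succ_pow_div_pos {f : ℕ → ℝ} (hf : ∀ k, 0 < f k) (r : ℝ) (n : ℕ) :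
    0 < ∑ k ∈ range (n + 1), r ^ (2 * k) / f k :=
  sum_pos' (fun k _ => div_nonneg ((even_two_mul k).pow_nonneg r) (hf k).le)
    ⟨0, by simp, by simpa using hf 0⟩

section Lowering

variable {E : Type*} [AddCommGroup E] [Module ℂ E]

noncomputable def truncCoherent (e : ℕ → E) (f : ℕ → ℝ) (z : ℂ) (n : ℕ) : E :=
  ∑ k ∈ range n, (z ^ k / (Real.sqrt (f k) : ℂ)) • e k

lemma coherentCoeff_succ_mul_sqrt {f x : ℕ → ℝ} {k : ℕ} (hfk : 0 ≤ f k)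
    (hf : f (k + 1) = f k * x (k + 1)) (hx : 0 < x (k + 1)) (z : ℂ) :
    z ^ (k + 1) / (Real.sqrt (f (k + 1)) : ℂ) * (Real.sqrt (x (k + 1)) : ℂ)
      = z * (z ^ k / (Real.sqrt (f k) : ℂ)) := by
  have hsx : (Real.sqrt (x (k + 1)) : ℂ) ≠ 0 := by exact_mod_cast (Real.sqrt_pos.mpr hx).ne'
  rw [hf, Real.sqrt_mul hfk, Complex.ofReal_mul, div_mul_eq_div_div, div_mul_cancel₀ _ hsx,
    pow_succ', mul_div_assoc]

lemma map_truncCoherent_succ (T : E →ₗ[ℂ] E) {e : ℕ → E} {f x : ℕ → ℝ} (z : ℂ) {n : ℕ}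
    (hT0 : T (e 0) = 0) (hT : ∀ k < n, T (e (k + 1)) = (Real.sqrt (x (k + 1)) : ℂ) • e k)
    (hf_nonneg : ∀ k, 0 ≤ f k) (hf : ∀ k, f (k + 1) = f k * x (k + 1))
    (hx : ∀ k, 0 < x (k + 1)) :
    T (truncCoherent e f z (n + 1)) = z • truncCoherent e f z n := by
  rw [truncCoherent, truncCoherent, sum_range_succ', map_add, map_smul, hT0, smul_zero, add_zero,
    map_sum, smul_sum]
  refine sum_congr rfl fun k hk => ?_
  rw [map_smul, hT k (mem_range.mp hk), smul_smul, smul_smul,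
    coherentCoeff_succ_mul_sqrt (hf_nonneg k) (hf k) (hx k)]

end Lowering

lemma inv_sqrt_mul_eq_mul_sqrt_div_mul_inv_sqrt {a b : ℝ} (ha : 0 < a) (z : ℂ) :
    ((Real.sqrt b)⁻¹ : ℂ) * z
      = z * (Real.sqrt (a / b) : ℂ) * ((Real.sqrt a)⁻¹ : ℂ) := by
  have hsa : (Real.sqrt a : ℂ) ≠ 0 := by exact_mod_cast (Real.sqrt_pos.mpr ha).ne'
  rw [Real.sqrt_div ha.le, Complex.ofReal_div]
  field_simp

theorem statement_11_general
    {H : Type*} [NormedAddCommGroup H] [InnerProductSpace ℂ H]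
    (Φ : HilbertBasis ℕ ℂ H)
    (x : ℕ → ℝ) (hx_pos : ∀ n, 1 ≤ n → 0 < x n)
    (A : ℕ → H →L[ℂ] H)
    (hA_zero : ∀ L, A L (Φ 0) = 0)
    (hA_mid : ∀ L k, 1 ≤ k → k ≤ L + 1 →
      A L (Φ k) = (Real.sqrt (x k) : ℂ) • Φ (k - 1))
    (xfact : ℕ → ℝ) (hxfact0 : xfact 0 = 1)
    (hxfact : ∀ k, xfact (k + 1) = xfact k * x (k + 1))
    (z : ℂ)
    (NL : ℕ → ℝ)
    (hNL : ∀ L, NL L = ∑ k ∈ Finset.range (L + 2), ‖z‖ ^ (2 * k) / xfact k)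
    (Ψ : ℕ → H)
    (hΨ : ∀ L, Ψ L = ((Real.sqrt (NL L))⁻¹ : ℂ)
        • ∑ k ∈ Finset.range (L + 2), (z ^ k / (Real.sqrt (xfact k) : ℂ)) • Φ k)
    (L : ℕ) (hL : 1 ≤ L) :
    A L (Ψ L) = (z * (Real.sqrt (NL (L - 1) / NL L) : ℂ)) • Ψ (L - 1) := by
  have hx : ∀ k, 0 < x (k + 1) := fun k => hx_pos (k + 1) k.succ_pos
  have hxfact_pos : ∀ k, 0 < xfact k := pos_of_succ_eq_mul (by simp [hxfact0]) hxfact hx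
  have hNL_pos : 0 < NL (L - 1) := by rw [hNL]; exact sum_range_succ_pow_div_pos hxfact_pos _ _
  have hlower : A L (truncCoherent Φ xfact z (L + 2)) = z • truncCoherent Φ xfact z (L + 1) :=
    map_truncCoherent_succ (A L).toLinearMap z (hA_zero L)
      (fun k hk => hA_mid L (k + 1) k.succ_pos hk) (fun k => (hxfact_pos k).le) hxfact hx
  have hL' : L - 1 + 2 = L + 1 := by omega
  rw [hΨ L, hΨ (L - 1), hL', ← truncCoherent, ← truncCoherent, map_smul, hlower, smul_smul,
    smul_smul, inv_sqrt_mul_eq_mul_sqrt_div_mul_inv_sqrt hNL_pos]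

/-- For every z ∈ ℂ and every L ≥ 1 the quasi-coherent state satisfies
A_L Ψ_L(z) = z √(N_{L−1}(|z|²)/N_L(|z|²)) Ψ_{L−1}(z). -/
theorem statement_11
    {H : Type*} [NormedAddCommGroup H] [InnerProductSpace ℂ H] [CompleteSpace H]
    (Φ : HilbertBasis ℕ ℂ H)
    (x : ℕ → ℝ) (hx_nonneg : ∀ n, 0 ≤ x n) (hx_pos : ∀ n, 1 ≤ n → 0 < x n)
    (A : ℕ → H →L[ℂ] H)
    (hA_zero : ∀ L, A L (Φ 0) = 0)
    (hA_mid : ∀ L k, 1 ≤ k → k ≤ L + 1 →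
      A L (Φ k) = (Real.sqrt (x k) : ℂ) • Φ (k - 1))
    (hA_hi : ∀ L k, L + 2 ≤ k → A L (Φ k) = 0)
    (xfact : ℕ → ℝ) (hxfact0 : xfact 0 = 1)
    (hxfact : ∀ k, xfact (k + 1) = xfact k * x (k + 1))
    (z : ℂ)
    (NL : ℕ → ℝ)
    (hNL : ∀ L, NL L = ∑ k ∈ Finset.range (L + 2), ‖z‖ ^ (2 * k) / xfact k)
    (Ψ : ℕ → H)
    (hΨ : ∀ L, Ψ L = ((Real.sqrt (NL L))⁻¹ : ℂ)
        • ∑ k ∈ Finset.range (L + 2), (z ^ k / (Real.sqrt (xfact k) : ℂ)) • Φ k)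
    (L : ℕ) (hL : 1 ≤ L) :
    A L (Ψ L) = (z * (Real.sqrt (NL (L - 1) / NL L) : ℂ)) • Ψ (L - 1) :=
  statement_11_general Φ x hx_pos A hA_zero hA_mid xfact hxfact0 hxfact z NL hNL Ψ hΨ L hL
end

section
/- Let z ∈ ℂ be such that Σ_{k=0}^{∞} |z|^{2k}/x_k! converges. Then lim_{L→∞} ‖A_L Ψ_L(z) − z Ξ(z)‖ = 0; that is, the approximated eigenvalue relation for the quasi-coherent states converges in norm to the eigenvalue equation for the generalized coherent state Ξ(z). -/
/-!
Since `√(x_{k+1}!) = √(x_k!) · √(x_{k+1})`, the weighted shift `A_L` maps the truncated coherent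
vector `∑_{k ≤ L+1} z^k / √(x_k!) Φ_k` to exactly `z` times its truncation at `L`. Hence
`A_L Ψ_L(z) = z · N_L^{-1/2} ∑_{k ≤ L} z^k / √(x_k!) Φ_k`; the normalisations converge to
`N(|z|²)^{-1/2}` and, the coefficients being square-summable against an orthonormal basis, the
partial sums converge to the series defining `Ξ(z)`.
-/

open Filter Finset Topology

theorem Orthonormal.summable_smul_iff {ι 𝕜 E : Type*} [RCLike 𝕜] [NormedAddCommGroup E]
    [InnerProductSpace 𝕜 E] [CompleteSpace E] {v : ι → E} (hv : Orthonormal 𝕜 v) (c : ι → 𝕜) :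
    Summable (fun i => c i • v i) ↔ Summable (fun i => ‖c i‖ ^ 2) := by
  simpa using hv.orthogonalFamily.summable_iff_norm_sq_summable c

theorem pos_of_eq_mul_succ {x f : ℕ → ℝ} (hx : ∀ n, 1 ≤ n → 0 < x n) (h0 : f 0 = 1)
    (hf : ∀ k, f (k + 1) = f k * x (k + 1)) (k : ℕ) : 0 < f k := by
  induction k with
  | zero => simp [h0]
  | succ k ih => rw [hf]; exact mul_pos ih (hx _ k.succ_pos)

theorem norm_pow_div_sqrt_sq (z : ℂ) (k : ℕ) {a : ℝ} (ha : 0 ≤ a) :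
    ‖z ^ k / (√a : ℂ)‖ ^ 2 = ‖z‖ ^ (2 * k) / a := by
  rw [norm_div, Complex.norm_real, Real.norm_of_nonneg (Real.sqrt_nonneg a), div_pow,
    Real.sq_sqrt ha, norm_pow, ← pow_mul, mul_comm]

theorem pow_succ_div_sqrt_mul_sqrt (z : ℂ) (k : ℕ) {a b : ℝ} (ha : 0 ≤ a) (hb : 0 < b) :
    z ^ (k + 1) / (√(a * b) : ℂ) * (√b : ℂ) = z * (z ^ k / (√a : ℂ)) := by
  have hb' : (√b : ℂ) ≠ 0 := by exact_mod_cast (Real.sqrt_pos.mpr hb).ne'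
  rw [Real.sqrt_mul ha, Complex.ofReal_mul, pow_succ]
  field_simp

theorem map_sum_range_of_weighted_shift {R M F : Type*} [Semiring R] [AddCommMonoid M]
    [Module R M] [FunLike F M M] [LinearMapClass F R M M] (T : F) (e : ℕ → M) (w a : ℕ → R)
    (n : ℕ) (h0 : T (e 0) = 0) (hsucc : ∀ k < n, T (e (k + 1)) = w (k + 1) • e k) :
    T (∑ k ∈ range (n + 1), a k • e k) = ∑ k ∈ range n, (a (k + 1) * w (k + 1)) • e k := by
  rw [sum_range_succ', map_add, map_sum, map_smul, h0, smul_zero, add_zero]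
  refine sum_congr rfl fun k hk => ?_
  rw [map_smul, hsucc k (mem_range.mp hk), smul_smul]

theorem tendsto_ofReal_inv_sqrt {α : Type*} {l : Filter α} {f : α → ℝ} {a : ℝ}
    (hf : Tendsto f l (𝓝 a)) (ha : 0 < a) :
    Tendsto (fun n => ((√(f n))⁻¹ : ℂ)) l (𝓝 ((√a)⁻¹ : ℂ)) := by
  have h := ((Real.continuous_sqrt.tendsto a).comp hf).inv₀ (Real.sqrt_pos.mpr ha).ne'
  simpa [Function.comp_def] using (Complex.continuous_ofReal.tendsto _).comp h

theorem statement_12_general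
    {H : Type*} [NormedAddCommGroup H] [InnerProductSpace ℂ H] [CompleteSpace H]
    (Φ : HilbertBasis ℕ ℂ H)
    (x : ℕ → ℝ) (hx_pos : ∀ n, 1 ≤ n → 0 < x n)
    (A : ℕ → H →L[ℂ] H)
    (hA_zero : ∀ L, A L (Φ 0) = 0)
    (hA_mid : ∀ L k, 1 ≤ k → k ≤ L + 1 →
      A L (Φ k) = (Real.sqrt (x k) : ℂ) • Φ (k - 1))
    (xfact : ℕ → ℝ) (hxfact0 : xfact 0 = 1)
    (hxfact : ∀ k, xfact (k + 1) = xfact k * x (k + 1))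
    (z : ℂ)
    (hconv : Summable (fun k : ℕ => ‖z‖ ^ (2 * k) / xfact k))
    (Ξ : H)
    (hΞ : Ξ = ((Real.sqrt (∑' k : ℕ, ‖z‖ ^ (2 * k) / xfact k))⁻¹ : ℂ)
        • ∑' k : ℕ, (z ^ k / (Real.sqrt (xfact k) : ℂ)) • Φ k)
    (NL : ℕ → ℝ)
    (hNL : ∀ L, NL L = ∑ k ∈ Finset.range (L + 2), ‖z‖ ^ (2 * k) / xfact k)
    (Ψ : ℕ → H)
    (hΨ : ∀ L, Ψ L = ((Real.sqrt (NL L))⁻¹ : ℂ)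
        • ∑ k ∈ Finset.range (L + 2), (z ^ k / (Real.sqrt (xfact k) : ℂ)) • Φ k) :
    Tendsto (fun L => ‖A L (Ψ L) - z • Ξ‖) atTop (nhds 0) := by
  have hpos : ∀ k, 0 < xfact k := pos_of_eq_mul_succ hx_pos hxfact0 hxfact
  set c : ℕ → ℂ := fun k => z ^ k / (√(xfact k) : ℂ)
  have hsum : Summable (fun k => c k • Φ k) :=
    (Φ.orthonormal.summable_smul_iff c).mpr <| by
      simpa only [c, norm_pow_div_sqrt_sq z _ (hpos _).le] using hconv
  have hN : 0 < ∑' k, ‖z‖ ^ (2 * k) / xfact k :=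
    hconv.tsum_pos (fun k => div_nonneg (by positivity) (hpos k).le) 0 (by simp [hxfact0])
  have hNL_lim : Tendsto NL atTop (𝓝 (∑' k, ‖z‖ ^ (2 * k) / xfact k)) := by
    simpa only [funext hNL, Function.comp_def] using
      hconv.hasSum.tendsto_sum_nat.comp (tendsto_add_atTop_nat 2)
  have hshift (L : ℕ) :
      A L (Ψ L) = ((√(NL L))⁻¹ : ℂ) • z • ∑ k ∈ range (L + 1), c k • Φ k := by
    have hA_succ (k : ℕ) (hk : k < L + 1) : A L (Φ (k + 1)) = (√(x (k + 1)) : ℂ) • Φ k := by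
      simpa using hA_mid L (k + 1) k.succ_pos hk
    rw [hΨ, map_smul, map_sum_range_of_weighted_shift (A L) Φ (fun k => (√(x k) : ℂ)) c (L + 1)
      (hA_zero L) hA_succ, smul_sum (r := z)]
    refine congrArg _ (sum_congr rfl fun k _ => ?_)
    rw [smul_smul]
    congr 1
    simp only [c, hxfact]
    exact pow_succ_div_sqrt_mul_sqrt z k (hpos k).le (hx_pos _ k.succ_pos)
  rw [← tendsto_iff_norm_sub_tendsto_zero, funext hshift, hΞ, smul_comm z]
  exact (tendsto_ofReal_inv_sqrt hNL_lim hN).smul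
    ((hsum.hasSum.tendsto_sum_nat.comp (tendsto_add_atTop_nat 1)).const_smul z)

/-- If Σ |z|^{2k}/x_k! converges, then
lim_{L→∞} ‖A_L Ψ_L(z) − z Ξ(z)‖ = 0. -/
theorem statement_12
    {H : Type*} [NormedAddCommGroup H] [InnerProductSpace ℂ H] [CompleteSpace H]
    (Φ : HilbertBasis ℕ ℂ H)
    (x : ℕ → ℝ) (hx_nonneg : ∀ n, 0 ≤ x n) (hx_pos : ∀ n, 1 ≤ n → 0 < x n)
    (A : ℕ → H →L[ℂ] H)
    (hA_zero : ∀ L, A L (Φ 0) = 0)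
    (hA_mid : ∀ L k, 1 ≤ k → k ≤ L + 1 →
      A L (Φ k) = (Real.sqrt (x k) : ℂ) • Φ (k - 1))
    (hA_hi : ∀ L k, L + 2 ≤ k → A L (Φ k) = 0)
    (xfact : ℕ → ℝ) (hxfact0 : xfact 0 = 1)
    (hxfact : ∀ k, xfact (k + 1) = xfact k * x (k + 1))
    (z : ℂ)
    (hconv : Summable (fun k : ℕ => ‖z‖ ^ (2 * k) / xfact k))
    (Ξ : H)
    (hΞ : Ξ = ((Real.sqrt (∑' k : ℕ, ‖z‖ ^ (2 * k) / xfact k))⁻¹ : ℂ)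
        • ∑' k : ℕ, (z ^ k / (Real.sqrt (xfact k) : ℂ)) • Φ k)
    (NL : ℕ → ℝ)
    (hNL : ∀ L, NL L = ∑ k ∈ Finset.range (L + 2), ‖z‖ ^ (2 * k) / xfact k)
    (Ψ : ℕ → H)
    (hΨ : ∀ L, Ψ L = ((Real.sqrt (NL L))⁻¹ : ℂ)
        • ∑ k ∈ Finset.range (L + 2), (z ^ k / (Real.sqrt (xfact k) : ℂ)) • Φ k) :
    Tendsto (fun L => ‖A L (Ψ L) - z • Ξ‖) atTop (nhds 0) :=
  statement_12_general Φ x hx_pos A hA_zero hA_mid xfact hxfact0 hxfact z hconv Ξ hΞ NL hNL Ψ hΨ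
end

section
/- Let b : ℕ → ℂ be an arbitrary sequence and z ∈ ℂ. For each L ∈ ℕ define the vector Υ_L(z) := Σ_{k=0}^{L+1} b(L+1−k) · (z^k/√(x_k!)) · Φ_k. Then for every L ≥ 1 one has A_L Υ_L(z) = z · Υ_{L−1}(z); that is, Υ_L(z) is an approximate eigenstate of A_L. -/
/-! Since `A_L Φ_{k+1} = √x_{k+1} Φ_k` and `√(x_{k+1}!) = √(x_k!) √x_{k+1}`, the coefficient of
`Φ_k` in `A_L Υ_L(z)` is `b(L-k) z^{k+1} / √(x_k!)`, which is `z` times its coefficient in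
`Υ_{L-1}(z)`. -/

open Finset

theorem map_sum_range_succ_smul_of_lowering {R M F : Type*} [Semiring R] [AddCommMonoid M]
    [Module R M] [FunLike F M M] [LinearMapClass F R M M] (T : F) (e : ℕ → M) (w c : ℕ → R)
    (n : ℕ) (h0 : T (e 0) = 0) (hsucc : ∀ k < n, T (e (k + 1)) = w (k + 1) • e k) :
    T (∑ k ∈ range (n + 1), c k • e k) = ∑ k ∈ range n, (c (k + 1) * w (k + 1)) • e k := by
  rw [map_sum, sum_range_succ', map_smul, h0, smul_zero, add_zero]
  refine sum_congr rfl fun k hk => ?_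
  rw [map_smul, hsucc k (mem_range.mp hk), smul_smul]

theorem div_ofReal_sqrt_mul_mul_ofReal_sqrt (w : ℂ) (a : ℝ) {t : ℝ} (ht : 0 < t) :
    w / (Real.sqrt (a * t) : ℂ) * (Real.sqrt t : ℂ) = w / (Real.sqrt a : ℂ) := by
  have hsqrt : (Real.sqrt t : ℂ) ≠ 0 := Complex.ofReal_ne_zero.mpr (Real.sqrt_pos.mpr ht).ne'
  rw [Real.sqrt_mul' a ht.le, Complex.ofReal_mul, div_mul_eq_div_div, div_mul_cancel₀ _ hsqrt]

theorem statement_16_general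
    {H : Type*} [NormedAddCommGroup H] [InnerProductSpace ℂ H] [CompleteSpace H]
    (Φ : HilbertBasis ℕ ℂ H)
    (x : ℕ → ℝ) (hx_pos : ∀ n, 1 ≤ n → 0 < x n)
    (A : ℕ → H →L[ℂ] H)
    (hA_zero : ∀ L, A L (Φ 0) = 0)
    (hA_mid : ∀ L k, 1 ≤ k → k ≤ L + 1 →
      A L (Φ k) = (Real.sqrt (x k) : ℂ) • Φ (k - 1))
    (xfact : ℕ → ℝ)
    (hxfact : ∀ k, xfact (k + 1) = xfact k * x (k + 1))
    (b : ℕ → ℂ) (z : ℂ)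
    (Υ : ℕ → H)
    (hΥ : ∀ L, Υ L = ∑ k ∈ Finset.range (L + 2),
        (b (L + 1 - k) * (z ^ k / (Real.sqrt (xfact k) : ℂ))) • Φ k)
    (L : ℕ) (hL : 1 ≤ L) :
    A L (Υ L) = z • Υ (L - 1) := by
  obtain ⟨M, rfl⟩ : ∃ M, L = M + 1 := ⟨L - 1, by omega⟩
  rw [hΥ, hΥ, map_sum_range_succ_smul_of_lowering (A (M + 1)) Φ (fun k => (Real.sqrt (x k) : ℂ))
    _ _ (hA_zero _) fun k hk => hA_mid _ _ (by omega) (by omega), smul_sum]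
  refine sum_congr rfl fun k _ => ?_
  rw [smul_smul, Nat.add_sub_cancel, show M + 1 + 1 - (k + 1) = M + 1 - k by omega, hxfact,
    mul_assoc, div_ofReal_sqrt_mul_mul_ofReal_sqrt _ _ (hx_pos _ (by omega)), pow_succ', mul_div_assoc, mul_left_comm]

/-- For an arbitrary sequence b : ℕ → ℂ and z ∈ ℂ, the vectors
Υ_L(z) = Σ_{k=0}^{L+1} b(L+1−k) (z^k/√(x_k!)) Φ_k satisfy A_L Υ_L(z) = z Υ_{L−1}(z)
for every L ≥ 1. -/
theorem statement_16
    {H : Type*} [NormedAddCommGroup H] [InnerProductSpace ℂ H] [CompleteSpace H]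
    (Φ : HilbertBasis ℕ ℂ H)
    (x : ℕ → ℝ) (hx_nonneg : ∀ n, 0 ≤ x n) (hx_pos : ∀ n, 1 ≤ n → 0 < x n)
    (A : ℕ → H →L[ℂ] H)
    (hA_zero : ∀ L, A L (Φ 0) = 0)
    (hA_mid : ∀ L k, 1 ≤ k → k ≤ L + 1 →
      A L (Φ k) = (Real.sqrt (x k) : ℂ) • Φ (k - 1))
    (hA_hi : ∀ L k, L + 2 ≤ k → A L (Φ k) = 0)
    (xfact : ℕ → ℝ) (hxfact0 : xfact 0 = 1)
    (hxfact : ∀ k, xfact (k + 1) = xfact k * x (k + 1))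
    (b : ℕ → ℂ) (z : ℂ)
    (Υ : ℕ → H)
    (hΥ : ∀ L, Υ L = ∑ k ∈ Finset.range (L + 2),
        (b (L + 1 - k) * (z ^ k / (Real.sqrt (xfact k) : ℂ))) • Φ k)
    (L : ℕ) (hL : 1 ≤ L) :
    A L (Υ L) = z • Υ (L - 1) :=
  statement_16_general Φ x hx_pos A hA_zero hA_mid xfact hxfact b z Υ hΥ L hL
end

section
/- The truncated Gazeau–Klauder states satisfy the approximated action identity: for every L ≥ 1, every J ≥ 0 and every γ ∈ ℝ, one has ⟨ |J, γ; L⟩ , H_L |J, γ; L⟩ ⟩ = J ω (N_{L−1}(J)/N_L(J))². -/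
/-!
In the basis `Φ` the operator `H_L` is diagonal with eigenvalues `ω ε_n`, so the expectation
value is `ω N_L⁻² ∑_{n ≤ L+1} ε_n J^n / ρ_n`; the phases `e^{-i ε_n γ}` have modulus one and
drop out. Since `ε_0 = 0` and `ε_n / ρ_n = 1 / ρ_{n-1}`, the sum shifts down one index to
`J ∑_{n ≤ L} J^n / ρ_n = J N_{L-1}²`.
-/

open scoped InnerProductSpace

theorem Orthonormal.inner_sum_map_sum_of_eigen {𝕜 E ι F : Type*} [RCLike 𝕜]
    [NormedAddCommGroup E] [InnerProductSpace 𝕜 E] [FunLike F E E] [LinearMapClass F 𝕜 E E]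
    {v : ι → E} (hv : Orthonormal 𝕜 v) (T : F) (s : Finset ι) (c μ : ι → 𝕜)
    (hT : ∀ i ∈ s, T (v i) = μ i • v i) :
    ⟪∑ i ∈ s, c i • v i, T (∑ i ∈ s, c i • v i)⟫_𝕜 = ∑ i ∈ s, μ i * ((‖c i‖ ^ 2 : ℝ) : 𝕜) := by
  have hTsum : T (∑ i ∈ s, c i • v i) = ∑ i ∈ s, (μ i * c i) • v i := by
    rw [map_sum]
    refine Finset.sum_congr rfl fun i hi => ?_
    rw [map_smul, hT i hi, smul_smul, mul_comm]
  rw [hTsum, hv.inner_sum]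
  refine Finset.sum_congr rfl fun i _ => ?_
  rw [mul_left_comm, RCLike.conj_mul, RCLike.ofReal_pow]

theorem Complex.norm_sq_sqrt_mul_exp_div_sqrt {a b : ℝ} (ha : 0 ≤ a) (hb : 0 ≤ b) {z : ℂ}
    (hz : z.re = 0) : ‖(Real.sqrt a : ℂ) * Complex.exp z / (Real.sqrt b : ℂ)‖ ^ 2 = a / b := by
  rw [norm_div, norm_mul, Complex.norm_exp, hz, Real.exp_zero, mul_one, Complex.norm_real,
    Complex.norm_real, Real.norm_of_nonneg (Real.sqrt_nonneg a),
    Real.norm_of_nonneg (Real.sqrt_nonneg b), div_pow, Real.sq_sqrt ha, Real.sq_sqrt hb]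

section ProductOfLevels

variable {ε ρ : ℕ → ℝ}

theorem pos_of_succ_eq_mul_s18 (hρ : ∀ n, ρ (n + 1) = ρ n * ε (n + 1)) (hρ0 : ρ 0 = 1)
    (hε : ∀ n, 0 < ε (n + 1)) (n : ℕ) : 0 < ρ n := by
  induction n with
  | zero => simp [hρ0]
  | succ k ih => rw [hρ]; exact mul_pos ih (hε k)

theorem sum_pow_div_pos (hρ : ∀ n, 0 < ρ n) {J : ℝ} (hJ : 0 ≤ J) (m : ℕ) :
    0 < ∑ n ∈ Finset.range (m + 1), J ^ n / ρ n :=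
  Finset.sum_pos' (fun n _ => div_nonneg (pow_nonneg hJ n) (hρ n).le)
    ⟨0, by simp, by simpa using hρ 0⟩

theorem sum_mul_pow_div_eq_mul_sum (hρ : ∀ n, ρ (n + 1) = ρ n * ε (n + 1)) (hε0 : ε 0 = 0)
    (hε : ∀ n, ε (n + 1) ≠ 0) (J : ℝ) (m : ℕ) :
    ∑ n ∈ Finset.range (m + 1), ε n * (J ^ n / ρ n) = J * ∑ n ∈ Finset.range m, J ^ n / ρ n := by
  rw [Finset.sum_range_succ', hε0, zero_mul, add_zero, Finset.mul_sum]
  refine Finset.sum_congr rfl fun n _ => ?_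
  rw [hρ, pow_succ]
  have := hε n
  by_cases hρn : ρ n = 0
  · simp [hρn]
  · field_simp

end ProductOfLevels

theorem statement_18_general
    {H : Type*} [NormedAddCommGroup H] [InnerProductSpace ℂ H]
    (Φ : HilbertBasis ℕ ℂ H)
    (ε : ℕ → ℝ) (hε0 : ε 0 = 0) (hεmono : StrictMono ε)
    (ω : ℝ)
    (ρfact : ℕ → ℝ) (hρfact0 : ρfact 0 = 1)
    (hρfact : ∀ n, ρfact (n + 1) = ρfact n * ε (n + 1))
    (NL : ℕ → ℝ → ℝ)
    (hNL : ∀ L J, NL L J = Real.sqrt (∑ n ∈ Finset.range (L + 2), J ^ n / ρfact n))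
    (ket : ℝ → ℝ → ℕ → H)
    (hket : ∀ (J γ : ℝ) (L : ℕ), ket J γ L = ((NL L J)⁻¹ : ℂ)
        • ∑ n ∈ Finset.range (L + 2),
            (((Real.sqrt (J ^ n) : ℝ) : ℂ) * Complex.exp (-Complex.I * (ε n : ℂ) * (γ : ℂ))
              / ((Real.sqrt (ρfact n) : ℝ) : ℂ)) • Φ n)
    (HL : ℕ → H →L[ℂ] H)
    (hHL_low : ∀ L n, n ≤ L + 1 → HL L (Φ n) = (((ω * ε n : ℝ)) : ℂ) • Φ n)
    (L : ℕ) (hL : 1 ≤ L) (J : ℝ) (hJ : 0 ≤ J) (γ : ℝ) :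
    ⟪ket J γ L, HL L (ket J γ L)⟫_ℂ
      = (((J * ω * (NL (L - 1) J / NL L J) ^ 2 : ℝ)) : ℂ) := by
  obtain ⟨M, rfl⟩ : ∃ M, L = M + 1 := ⟨L - 1, by omega⟩
  have hε : ∀ n, 0 < ε (n + 1) := fun n => hε0 ▸ hεmono n.succ_pos
  have hρ := pos_of_succ_eq_mul_s18 hρfact hρfact0 hε
  set N := NL (M + 1) J
  set c : ℕ → ℂ := fun n => ((Real.sqrt (J ^ n) : ℝ) : ℂ)
    * Complex.exp (-Complex.I * (ε n : ℂ) * (γ : ℂ)) / ((Real.sqrt (ρfact n) : ℝ) : ℂ)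
  have hket' : ket J γ (M + 1) = ∑ n ∈ Finset.range (M + 3), ((N⁻¹ : ℂ) * c n) • Φ n := by
    simp only [hket, Finset.smul_sum, smul_smul, N, c]
  have hnorm : ∀ n, ‖(N⁻¹ : ℂ) * c n‖ ^ 2 = N⁻¹ ^ 2 * (J ^ n / ρfact n) := fun n => by
    rw [norm_mul, mul_pow, Complex.norm_sq_sqrt_mul_exp_div_sqrt (pow_nonneg hJ n) (hρ n).le
      (by simp), ← Complex.ofReal_inv, Complex.norm_real, Real.norm_eq_abs, sq_abs]
  have hsum : ∑ n ∈ Finset.range (M + 3), ω * ε n * (N⁻¹ ^ 2 * (J ^ n / ρfact n))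
      = J * ω * (NL (M + 1 - 1) J / N) ^ 2 := by
    simp only [mul_left_comm (ω * ε _), mul_assoc ω, ← Finset.mul_sum,
      sum_mul_pow_div_eq_mul_sum hρfact hε0 (fun n => (hε n).ne'), Nat.add_sub_cancel, hNL,
      div_pow, Real.sq_sqrt (sum_pow_div_pos hρ hJ _).le]
    ring
  rw [hket', Φ.orthonormal.inner_sum_map_sum_of_eigen (HL (M + 1)) _ _
    (fun n => ((ω * ε n : ℝ) : ℂ))
    fun n hn => hHL_low _ n (Nat.lt_succ_iff.mp (Finset.mem_range.mp hn))]
  simp only [hnorm, RCLike.ofReal_eq_complex_ofReal]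
  exact_mod_cast hsum

/-- The truncated Gazeau–Klauder states satisfy the approximated action
identity: ⟨J,γ;L| H_L |J,γ;L⟩ = J ω (N_{L−1}(J)/N_L(J))² for L ≥ 1. -/
theorem statement_18
    {H : Type*} [NormedAddCommGroup H] [InnerProductSpace ℂ H] [CompleteSpace H]
    (Φ : HilbertBasis ℕ ℂ H)
    (ε : ℕ → ℝ) (hε0 : ε 0 = 0) (hεmono : StrictMono ε)
    (ω : ℝ)
    (ρfact : ℕ → ℝ) (hρfact0 : ρfact 0 = 1)
    (hρfact : ∀ n, ρfact (n + 1) = ρfact n * ε (n + 1))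
    (NL : ℕ → ℝ → ℝ)
    (hNL : ∀ L J, NL L J = Real.sqrt (∑ n ∈ Finset.range (L + 2), J ^ n / ρfact n))
    (ket : ℝ → ℝ → ℕ → H)
    (hket : ∀ (J γ : ℝ) (L : ℕ), ket J γ L = ((NL L J)⁻¹ : ℂ)
        • ∑ n ∈ Finset.range (L + 2),
            (((Real.sqrt (J ^ n) : ℝ) : ℂ) * Complex.exp (-Complex.I * (ε n : ℂ) * (γ : ℂ))
              / ((Real.sqrt (ρfact n) : ℝ) : ℂ)) • Φ n)
    (HL : ℕ → H →L[ℂ] H)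
    (hHL_low : ∀ L n, n ≤ L + 1 → HL L (Φ n) = (((ω * ε n : ℝ)) : ℂ) • Φ n)
    (hHL_hi : ∀ L n, L + 2 ≤ n → HL L (Φ n) = 0)
    (L : ℕ) (hL : 1 ≤ L) (J : ℝ) (hJ : 0 ≤ J) (γ : ℝ) :
    ⟪ket J γ L, HL L (ket J γ L)⟫_ℂ
      = (((J * ω * (NL (L - 1) J / NL L J) ^ 2 : ℝ)) : ℂ) :=
  statement_18_general Φ ε hε0 hεmono ω ρfact hρfact0 hρfact NL hNL ket hket HL hHL_low L hL J hJ γ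
end

section
/- Let q ∈ ℝ and f : ℕ → ℝ be a function with f(k) > 0 for all k, and suppose the sequence (x_n) satisfies x_0 = 0 and x_{n+1} = Σ_{k=0}^{n} q^{n−k} f(k) for all n ≥ 0 (equivalently, x_1 = f(0) and x_{n+1} = q x_n + f(n)). Then the operators A_L built from this sequence satisfy the generalized q-mutation relation on the truncated range: for every L ∈ ℕ and every k with 0 ≤ k ≤ L, (A_L A_L† − q A_L† A_L) Φ_k = f(k) Φ_k. -/
/-!
On the basis vectors the operator `A_L` lowers the index with weight `√x_k`, so its adjoint raises
it with the same weight as long as the index stays at most `L`.  Hence `A_L A_L†` and `A_L† A_L`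
act diagonally on `Φ_k` for `k ≤ L`, with eigenvalues `x_{k+1}` and `x_k`, and the recursion
`x_{k+1} = q x_k + f k` is exactly the claimed relation.
-/

open ContinuousLinearMap

theorem HilbertBasis.ext_inner_left_s19 {ι 𝕜 E : Type*} [RCLike 𝕜] [NormedAddCommGroup E]
    [InnerProductSpace 𝕜 E] (b : HilbertBasis ι 𝕜 E) {v w : E}
    (h : ∀ i, inner 𝕜 (b i) v = inner 𝕜 (b i) w) : v = w :=
  b.repr.injective <| by ext i; simp only [b.repr_apply_apply, h]

namespace TruncatedLowering

variable {𝕜 H : Type*} [RCLike 𝕜] [NormedAddCommGroup H] [InnerProductSpace 𝕜 H] [CompleteSpace H]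
  (Φ : HilbertBasis ℕ 𝕜 H) {x : ℕ → ℝ} {A : H →L[𝕜] H} {L : ℕ}
  (hA_zero : A (Φ 0) = 0)
  (hA_succ : ∀ k ≤ L, A (Φ (k + 1)) = (Real.sqrt (x (k + 1)) : 𝕜) • Φ k)
  (hA_hi : ∀ k, L + 2 ≤ k → A (Φ k) = 0)
include hA_zero hA_succ hA_hi

theorem adjoint_apply_basis {m : ℕ} (hm : m ≤ L) :
    adjoint A (Φ m) = (Real.sqrt (x (m + 1)) : 𝕜) • Φ (m + 1) := by
  have hΦ := orthonormal_iff_ite.mp Φ.orthonormal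
  refine Φ.ext_inner_left_s19 fun i ↦ ?_
  rw [adjoint_inner_right, inner_smul_right, hΦ]
  rcases i with _ | j
  · simp [hA_zero]
  rcases le_or_gt j L with hj | hj
  · rw [hA_succ j hj, inner_smul_left, hΦ, RCLike.conj_ofReal]
    by_cases hjm : j = m <;> simp [hjm]
  · simp [hA_hi (j + 1) (by omega), show j ≠ m by omega]

theorem apply_adjoint_apply_basis (hx : ∀ n, 0 ≤ x n) {m : ℕ} (hm : m ≤ L) :
    A (adjoint A (Φ m)) = (x (m + 1) : 𝕜) • Φ m := by
  rw [adjoint_apply_basis Φ hA_zero hA_succ hA_hi hm, map_smul, hA_succ m hm, smul_smul,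
    ← RCLike.ofReal_mul, Real.mul_self_sqrt (hx _)]

theorem adjoint_apply_apply_basis (hx : ∀ n, 0 ≤ x n) (hx0 : x 0 = 0) {m : ℕ} (hm : m ≤ L + 1) :
    adjoint A (A (Φ m)) = (x m : 𝕜) • Φ m := by
  rcases m with _ | j
  · simp [hA_zero, hx0]
  rw [hA_succ j (by omega), map_smul, adjoint_apply_basis Φ hA_zero hA_succ hA_hi (by omega),
    smul_smul, ← RCLike.ofReal_mul, Real.mul_self_sqrt (hx _)]

theorem commutator_apply_basis (hx : ∀ n, 0 ≤ x n) (hx0 : x 0 = 0) (q : ℝ) {k : ℕ} (hk : k ≤ L) :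
    (A ∘L adjoint A - (q : 𝕜) • (adjoint A ∘L A)) (Φ k) = ((x (k + 1) - q * x k : ℝ) : 𝕜) • Φ k := by
  rw [sub_apply, smul_apply, comp_apply, comp_apply,
    apply_adjoint_apply_basis Φ hA_zero hA_succ hA_hi hx hk,
    adjoint_apply_apply_basis Φ hA_zero hA_succ hA_hi hx hx0 (by omega), smul_smul, ← sub_smul,
    RCLike.ofReal_sub, RCLike.ofReal_mul]

end TruncatedLowering

theorem statement_19_general
    {H : Type*} [NormedAddCommGroup H] [InnerProductSpace ℂ H] [CompleteSpace H]
    (Φ : HilbertBasis ℕ ℂ H)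
    (x : ℕ → ℝ) (hx_nonneg : ∀ n, 0 ≤ x n)
    (A : ℕ → H →L[ℂ] H)
    (hA_zero : ∀ L, A L (Φ 0) = 0)
    (hA_mid : ∀ L k, 1 ≤ k → k ≤ L + 1 →
      A L (Φ k) = (Real.sqrt (x k) : ℂ) • Φ (k - 1))
    (hA_hi : ∀ L k, L + 2 ≤ k → A L (Φ k) = 0)
    (q : ℝ) (f : ℕ → ℝ)
    (hx0 : x 0 = 0)
    (hrec : ∀ n, x (n + 1) = q * x n + f n)
    (L : ℕ) (k : ℕ) (hk : k ≤ L) :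
    (A L ∘L ContinuousLinearMap.adjoint (A L)
      - ((q : ℝ) : ℂ) • (ContinuousLinearMap.adjoint (A L) ∘L A L)) (Φ k)
      = ((f k : ℝ) : ℂ) • Φ k := by
  have hA_succ : ∀ j ≤ L, A L (Φ (j + 1)) = (Real.sqrt (x (j + 1)) : ℂ) • Φ j := fun j hj ↦
    hA_mid L (j + 1) (by omega) (by omega)
  have key := TruncatedLowering.commutator_apply_basis Φ (hA_zero L) hA_succ (hA_hi L)
    hx_nonneg hx0 q hk
  rwa [hrec k, add_sub_cancel_left] at key

/-- If x_0 = 0 and x_{n+1} = q x_n + f(n) with f(k) > 0, then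
(A_L A_L† − q A_L† A_L) Φ_k = f(k) Φ_k for every L and every 0 ≤ k ≤ L. -/
theorem statement_19
    {H : Type*} [NormedAddCommGroup H] [InnerProductSpace ℂ H] [CompleteSpace H]
    (Φ : HilbertBasis ℕ ℂ H)
    (x : ℕ → ℝ) (hx_nonneg : ∀ n, 0 ≤ x n) (hx_pos : ∀ n, 1 ≤ n → 0 < x n)
    (A : ℕ → H →L[ℂ] H)
    (hA_zero : ∀ L, A L (Φ 0) = 0)
    (hA_mid : ∀ L k, 1 ≤ k → k ≤ L + 1 →
      A L (Φ k) = (Real.sqrt (x k) : ℂ) • Φ (k - 1))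
    (hA_hi : ∀ L k, L + 2 ≤ k → A L (Φ k) = 0)
    (q : ℝ) (f : ℕ → ℝ) (hf : ∀ k, 0 < f k)
    (hx0 : x 0 = 0)
    (hrec : ∀ n, x (n + 1) = q * x n + f n)
    (L : ℕ) (k : ℕ) (hk : k ≤ L) :
    (A L ∘L ContinuousLinearMap.adjoint (A L)
      - ((q : ℝ) : ℂ) • (ContinuousLinearMap.adjoint (A L) ∘L A L)) (Φ k)
      = ((f k : ℝ) : ℂ) • Φ k :=
  statement_19_general Φ x hx_nonneg A hA_zero hA_mid hA_hi q f hx0 hrec L k hk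
end
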